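/- The logarithmic derivative of Φ, i.e. the function x ↦ Φ'(x)/Φ(x), is strictly monotone increasing on (-∞, 1). -/

import Mathlib

/-- The complete elliptic integral of the first kind,
`K(m) = ∫₀¹ dζ / √((1-ζ²)(1-mζ²))`, defined for `m < 1`. -/
noncomputable def ellipticK (m : ℝ) : ℝ :=
  ∫ ζ in (0:ℝ)..1, 1 / Real.sqrt ((1 - ζ ^ 2) * (1 - m * ζ ^ 2))

/-- `Φ(x) = K((1-√(1-x))/(1+√(1-x))) / √(1+√(1-x))`, defined for `x < 1`. -/
noncomputable def Phi (x : ℝ) : ℝ :=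
  ellipticK ((1 - Real.sqrt (1 - x)) / (1 + Real.sqrt (1 - x))) /
    Real.sqrt (1 + Real.sqrt (1 - x))

/-!
With `t = √(1 - x)` and `m = (1 - t) / (1 + t)` one has
`(1 - ζ²)(1 - m ζ²)(1 + t) = (1 - ζ²)((1 - ζ²) + (1 + ζ²) t)`, so
`Φ(x) = ∫₀¹ dζ / √((1 - ζ²)((1 - ζ²) + (1 + ζ²) √(1 - x)))`.
For each `ζ` the integrand is strictly log-convex in `x`, because `√(1 - x)` is strictly concave
and `log` is concave and increasing. By Hölder's inequality an integral of log-convex functions is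
log-convex, so `log Φ` is strictly convex on `(-∞, 1)`; differentiating under the integral sign
shows that `Φ` is differentiable there, and the derivative `Φ'/Φ` of `log Φ` is strictly increasing.
-/

open MeasureTheory Set Filter Topology

namespace MeasureTheory

variable {α : Type*} [MeasurableSpace α] {μ : Measure α}

theorem integral_lt_integral_of_ae_lt [NeZero μ] {f g : α → ℝ} (hf : Integrable f μ)
    (hg : Integrable g μ) (hfg : ∀ᵐ a ∂μ, f a < g a) : ∫ a, f a ∂μ < ∫ a, g a ∂μ := by
  have hle : f ≤ᵐ[μ] g := hfg.mono fun _ => le_of_lt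
  refine (integral_mono_ae hf hg hle).lt_of_ne fun h => ?_
  obtain ⟨a, hlt, heq⟩ := (hfg.and ((integral_eq_iff_of_ae_le hf hg hle).1 h)).exists
  exact hlt.ne heq

theorem integral_pos_of_ae_pos [NeZero μ] {f : α → ℝ} (hf : Integrable f μ)
    (hf0 : ∀ᵐ a ∂μ, 0 < f a) : 0 < ∫ a, f a ∂μ := by
  simpa using integral_lt_integral_of_ae_lt (integrable_zero α ℝ μ) hf hf0

theorem integral_rpow_mul_rpow_le {f g : α → ℝ} (hf0 : 0 ≤ᵐ[μ] f) (hg0 : 0 ≤ᵐ[μ] g)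
    (hf : Integrable f μ) (hg : Integrable g μ) {p q : ℝ} (hp : 0 ≤ p) (hq : 0 ≤ q)
    (hpq : p + q = 1) :
    ∫ a, f a ^ p * g a ^ q ∂μ ≤ (∫ a, f a ∂μ) ^ p * (∫ a, g a ∂μ) ^ q := by
  have hfg0 : 0 ≤ᵐ[μ] fun a => f a ^ p * g a ^ q := by
    filter_upwards [hf0, hg0] with a ha hb using
      mul_nonneg (Real.rpow_nonneg ha p) (Real.rpow_nonneg hb q)
  have hofReal : (fun a => ENNReal.ofReal (f a ^ p * g a ^ q)) =ᵐ[μ]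
      fun a => ENNReal.ofReal (f a) ^ p * ENNReal.ofReal (g a) ^ q := by
    filter_upwards [hf0, hg0] with a ha hb
    rw [ENNReal.ofReal_mul (Real.rpow_nonneg ha p), ENNReal.ofReal_rpow_of_nonneg ha hp,
      ENNReal.ofReal_rpow_of_nonneg hb hq]
  have hholder := ENNReal.lintegral_mul_norm_pow_le hf.1.aemeasurable.ennreal_ofReal
    hg.1.aemeasurable.ennreal_ofReal hp hq hpq
  rw [integral_eq_lintegral_of_nonneg_ae hfg0 (by fun_prop), lintegral_congr_ae hofReal,
    integral_eq_lintegral_of_nonneg_ae hf0 hf.1, integral_eq_lintegral_of_nonneg_ae hg0 hg.1,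
    ENNReal.toReal_rpow, ENNReal.toReal_rpow, ← ENNReal.toReal_mul]
  refine ENNReal.toReal_mono (ENNReal.mul_ne_top ?_ ?_) hholder
  · exact ENNReal.rpow_ne_top_of_nonneg hp
      ((lintegral_ofReal_ne_top_iff_integrable hf.1 hf0).2 hf)
  · exact ENNReal.rpow_ne_top_of_nonneg hq
      ((lintegral_ofReal_ne_top_iff_integrable hg.1 hg0).2 hg)

theorem Integrable.rpow_mul_rpow {f g : α → ℝ} (hf : Integrable f μ) (hg : Integrable g μ)
    (hf0 : 0 ≤ᵐ[μ] f) (hg0 : 0 ≤ᵐ[μ] g) {p q : ℝ} (hp : 0 ≤ p) (hq : 0 ≤ q)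
    (hpq : p + q = 1) : Integrable (fun a => f a ^ p * g a ^ q) μ := by
  refine ((hf.const_mul p).add (hg.const_mul q)).mono' (by fun_prop) ?_
  filter_upwards [hf0, hg0] with a ha hb
  rw [Real.norm_of_nonneg (mul_nonneg (Real.rpow_nonneg ha p) (Real.rpow_nonneg hb q))]
  exact Real.geom_mean_le_arith_mean2_weighted hp hq ha hb hpq

theorem strictConvexOn_log_integral {E : Type*} [AddCommGroup E] [Module ℝ E] [NeZero μ]
    {s : Set E} {F : E → α → ℝ} (hF : ∀ x ∈ s, Integrable (F x) μ)
    (hF0 : ∀ x ∈ s, ∀ᵐ a ∂μ, 0 < F x a)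
    (hlog : ∀ᵐ a ∂μ, StrictConvexOn ℝ s fun x => Real.log (F x a)) :
    StrictConvexOn ℝ s fun x => Real.log (∫ a, F x a ∂μ) := by
  have hpos : ∀ x ∈ s, 0 < ∫ a, F x a ∂μ := fun x hx =>
    integral_pos_of_ae_pos (hF x hx) (hF0 x hx)
  have hnonneg : ∀ x ∈ s, 0 ≤ᵐ[μ] F x := fun x hx => (hF0 x hx).mono fun _ h => h.le
  have hs : Convex ℝ s := by
    obtain ⟨_, h⟩ := hlog.exists
    exact h.1
  refine ⟨hs, fun x hx y hy hxy a b ha hb hab => ?_⟩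
  have hz := hs hx hy ha.le hb.le hab
  have hpoint : ∀ᵐ ζ ∂μ, F (a • x + b • y) ζ < F x ζ ^ a * F y ζ ^ b := by
    filter_upwards [hlog, hF0 x hx, hF0 y hy, hF0 _ hz] with ζ hζ hxζ hyζ hzζ
    rw [← Real.log_lt_log_iff hzζ (by positivity), Real.log_mul (by positivity) (by positivity),
      Real.log_rpow hxζ, Real.log_rpow hyζ, mul_comm, mul_comm (Real.log _)]
    exact hζ.2 hx hy hxy ha hb hab
  have hlt : ∫ ζ, F (a • x + b • y) ζ ∂μ < ∫ ζ, F x ζ ^ a * F y ζ ^ b ∂μ :=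
    integral_lt_integral_of_ae_lt (hF _ hz)
      ((hF x hx).rpow_mul_rpow (hF y hy) (hnonneg x hx) (hnonneg y hy) ha.le hb.le hab) hpoint
  have hholder : ∫ ζ, F x ζ ^ a * F y ζ ^ b ∂μ ≤ (∫ ζ, F x ζ ∂μ) ^ a * (∫ ζ, F y ζ ∂μ) ^ b :=
    integral_rpow_mul_rpow_le (hnonneg x hx) (hnonneg y hy) (hF x hx) (hF y hy) ha.le hb.le hab
  calc Real.log (∫ ζ, F (a • x + b • y) ζ ∂μ)
      < Real.log ((∫ ζ, F x ζ ∂μ) ^ a * (∫ ζ, F y ζ ∂μ) ^ b) :=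
        Real.log_lt_log (hpos _ hz) (hlt.trans_le hholder)
    _ = a • Real.log (∫ ζ, F x ζ ∂μ) + b • Real.log (∫ ζ, F y ζ ∂μ) := by
        rw [Real.log_mul (Real.rpow_pos_of_pos (hpos x hx) a).ne'
            (Real.rpow_pos_of_pos (hpos y hy) b).ne',
          Real.log_rpow (hpos x hx), Real.log_rpow (hpos y hy), smul_eq_mul, smul_eq_mul]

end MeasureTheory

theorem integrableOn_one_sub_sq_rpow_neg_half :
    IntegrableOn (fun ζ : ℝ => (1 - ζ ^ 2) ^ (-(1 / 2) : ℝ)) (Ioo 0 1) := by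
  have h := Polynomial.Chebyshev.intervalIntegrable_sqrt_one_sub_sq_inv
  rw [intervalIntegrable_iff_integrableOn_Ioo_of_le (by norm_num)] at h
  refine (h.mono_set (Ioo_subset_Ioo_left (by norm_num))).congr_fun (fun ζ hζ => ?_)
    measurableSet_Ioo
  dsimp only
  have : 0 ≤ 1 - ζ ^ 2 := by nlinarith [hζ.1, hζ.2]
  rw [Real.sqrt_eq_rpow, ← Real.rpow_neg_one, ← Real.rpow_mul this]
  norm_num

instance : NeZero (volume.restrict (Ioo (0 : ℝ) 1)) :=
  ⟨by simp [Measure.restrict_eq_zero]⟩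

section PhiKernel

noncomputable def phiKernel (t ζ : ℝ) : ℝ :=
  (1 - ζ ^ 2) ^ (-(1 / 2) : ℝ) * ((1 - ζ ^ 2) + (1 + ζ ^ 2) * t) ^ (-(1 / 2) : ℝ)

variable {t ζ : ℝ}

theorem phiKernel_pos (ht : 0 ≤ t) (hζ : ζ ∈ Ioo (0 : ℝ) 1) : 0 < phiKernel t ζ := by
  have : 0 < 1 - ζ ^ 2 := by nlinarith [hζ.1, hζ.2]
  unfold phiKernel
  positivity

theorem phiKernel_le (ht : 0 < t) (hζ : ζ ∈ Ioo (0 : ℝ) 1) :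
    phiKernel t ζ ≤ t ^ (-(1 / 2) : ℝ) * (1 - ζ ^ 2) ^ (-(1 / 2) : ℝ) := by
  have : 0 < 1 - ζ ^ 2 := by nlinarith [hζ.1, hζ.2]
  rw [phiKernel, mul_comm]
  refine mul_le_mul_of_nonneg_right (Real.rpow_le_rpow_of_nonpos ht ?_ (by norm_num))
    (Real.rpow_nonneg this.le _)
  nlinarith

theorem integrableOn_phiKernel (ht : 0 < t) : IntegrableOn (phiKernel t) (Ioo 0 1) := by
  refine (integrableOn_one_sub_sq_rpow_neg_half.const_mul (t ^ (-(1 / 2) : ℝ))).mono'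
    (by unfold phiKernel; fun_prop) ?_
  filter_upwards [ae_restrict_mem measurableSet_Ioo] with ζ hζ
  rw [Real.norm_of_nonneg (phiKernel_pos ht.le hζ).le]
  exact phiKernel_le ht hζ

theorem one_div_sqrt_div_sqrt_eq_phiKernel (ht : 0 ≤ t) (hζ : ζ ∈ Ioo (0 : ℝ) 1) :
    1 / √((1 - ζ ^ 2) * (1 - (1 - t) / (1 + t) * ζ ^ 2)) / √(1 + t) = phiKernel t ζ := by
  have hA : 0 < 1 - ζ ^ 2 := by nlinarith [hζ.1, hζ.2]
  have hB : 0 ≤ (1 - ζ ^ 2) + (1 + ζ ^ 2) * t := by positivity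
  have hm : (1 - ζ ^ 2) * (1 - (1 - t) / (1 + t) * ζ ^ 2) * (1 + t) =
      (1 - ζ ^ 2) * ((1 - ζ ^ 2) + (1 + ζ ^ 2) * t) := by
    field_simp
    ring
  rw [div_div, ← Real.sqrt_mul' _ (by linarith), hm, Real.sqrt_mul hA.le, Real.sqrt_eq_rpow,
    Real.sqrt_eq_rpow, phiKernel, one_div, mul_inv, ← Real.rpow_neg_one, ← Real.rpow_neg_one,
    ← Real.rpow_mul hA.le, ← Real.rpow_mul hB]
  norm_num

theorem Phi_eq_integral (x : ℝ) :
    Phi x = ∫ ζ in Ioo 0 1, phiKernel (√(1 - x)) ζ := by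
  rw [Phi, ellipticK, ← intervalIntegral.integral_div,
    intervalIntegral.integral_of_le zero_le_one, integral_Ioc_eq_integral_Ioo]
  exact setIntegral_congr_fun measurableSet_Ioo fun ζ hζ =>
    one_div_sqrt_div_sqrt_eq_phiKernel (Real.sqrt_nonneg _) hζ

theorem strictConcaveOn_log_add_mul_sqrt_one_sub {c d : ℝ} (hc : 0 < c) (hd : 0 < d) :
    StrictConcaveOn ℝ (Iio 1) fun x => Real.log (c + d * √(1 - x)) := by
  have hsqrt : StrictConcaveOn ℝ (Iio 1) fun x => c + d * √(1 - x) := by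
    refine ⟨convex_Iio 1, fun x hx y hy hxy a b ha hb hab => ?_⟩
    have h := Real.strictConcaveOn_sqrt.2 (x := 1 - x) (y := 1 - y)
      (by simp; linarith [mem_Iio.1 hx]) (by simp; linarith [mem_Iio.1 hy])
      (by intro h; apply hxy; linarith) ha hb hab
    have e : a • (1 - x) + b • (1 - y) = 1 - (a • x + b • y) := by
      simp only [smul_eq_mul]; linear_combination hab
    rw [e] at h
    simp only [smul_eq_mul] at h ⊢
    linear_combination d * h + c * hab
  have hpos : ∀ x, 0 < c + d * √(1 - x) := fun x => by positivity
  refine ⟨convex_Iio 1, fun x hx y hy hxy a b ha hb hab => ?_⟩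
  calc a • Real.log (c + d * √(1 - x)) + b • Real.log (c + d * √(1 - y))
      ≤ Real.log (a • (c + d * √(1 - x)) + b • (c + d * √(1 - y))) :=
        strictConcaveOn_log_Ioi.concaveOn.2 (hpos x) (hpos y) ha.le hb.le hab
    _ < Real.log (c + d * √(1 - (a • x + b • y))) :=
        Real.log_lt_log (by positivity) (hsqrt.2 hx hy hxy ha hb hab)

theorem log_phiKernel (ht : 0 ≤ t) (hζ : ζ ∈ Ioo (0 : ℝ) 1) :
    Real.log (phiKernel t ζ) =
      -(Real.log (1 - ζ ^ 2) + Real.log ((1 - ζ ^ 2) + (1 + ζ ^ 2) * t)) / 2 := by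
  have hA : 0 < 1 - ζ ^ 2 := by nlinarith [hζ.1, hζ.2]
  have hB : 0 < (1 - ζ ^ 2) + (1 + ζ ^ 2) * t := by positivity
  rw [phiKernel, Real.log_mul (by positivity) (by positivity), Real.log_rpow hA,
    Real.log_rpow hB]
  ring

theorem strictConvexOn_log_phiKernel (hζ : ζ ∈ Ioo (0 : ℝ) 1) :
    StrictConvexOn ℝ (Iio 1) fun x => Real.log (phiKernel (√(1 - x)) ζ) := by
  have hA : 0 < 1 - ζ ^ 2 := by nlinarith [hζ.1, hζ.2]
  have hconc := strictConcaveOn_log_add_mul_sqrt_one_sub hA (by positivity : 0 < 1 + ζ ^ 2)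
  refine ⟨convex_Iio 1, fun x hx y hy hxy a b ha hb hab => ?_⟩
  have h := hconc.2 hx hy hxy ha hb hab
  simp only [log_phiKernel (Real.sqrt_nonneg _) hζ, smul_eq_mul] at h ⊢
  linear_combination h / 2 + Real.log (1 - ζ ^ 2) / 2 * hab

noncomputable def phiKernelDeriv (t ζ : ℝ) : ℝ :=
  -(1 + ζ ^ 2) / 2 * (1 - ζ ^ 2) ^ (-(1 / 2) : ℝ) *
    ((1 - ζ ^ 2) + (1 + ζ ^ 2) * t) ^ (-(3 / 2) : ℝ)

theorem hasDerivAt_phiKernel (ht : 0 ≤ t) (hζ : ζ ∈ Ioo (0 : ℝ) 1) :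
    HasDerivAt (phiKernel · ζ) (phiKernelDeriv t ζ) t := by
  have hB : 0 < (1 - ζ ^ 2) + (1 + ζ ^ 2) * t := by nlinarith [hζ.1, hζ.2]
  refine (((((hasDerivAt_id t).const_mul (1 + ζ ^ 2)).const_add (1 - ζ ^ 2)).rpow_const
    (p := -(1 / 2)) (Or.inl hB.ne')).const_mul ((1 - ζ ^ 2) ^ (-(1 / 2) : ℝ))).congr_deriv ?_
  rw [phiKernelDeriv, id]
  norm_num
  ring

theorem abs_phiKernelDeriv_le {s : ℝ} (hs : 0 < s) (hst : s ≤ t) (hζ : ζ ∈ Ioo (0 : ℝ) 1) :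
    |phiKernelDeriv t ζ| ≤ s ^ (-(3 / 2) : ℝ) * (1 - ζ ^ 2) ^ (-(1 / 2) : ℝ) := by
  have hA : 0 < 1 - ζ ^ 2 := by nlinarith [hζ.1, hζ.2]
  have hBs : s ≤ (1 - ζ ^ 2) + (1 + ζ ^ 2) * t := by nlinarith [hζ.1, hζ.2]
  have hd : (1 + ζ ^ 2) / 2 ≤ 1 := by nlinarith [hζ.1, hζ.2]
  have hBpos : 0 < (1 - ζ ^ 2) + (1 + ζ ^ 2) * t := hs.trans_le hBs
  rw [phiKernelDeriv, abs_mul, abs_mul, abs_of_nonpos (by nlinarith),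
    abs_of_nonneg (Real.rpow_nonneg hA.le _), abs_of_nonneg (Real.rpow_nonneg hBpos.le _)]
  calc -(-(1 + ζ ^ 2) / 2) * (1 - ζ ^ 2) ^ (-(1 / 2) : ℝ) *
        ((1 - ζ ^ 2) + (1 + ζ ^ 2) * t) ^ (-(3 / 2) : ℝ)
      = (1 + ζ ^ 2) / 2 * ((1 - ζ ^ 2) + (1 + ζ ^ 2) * t) ^ (-(3 / 2) : ℝ) *
          (1 - ζ ^ 2) ^ (-(1 / 2) : ℝ) := by ring
    _ ≤ 1 * s ^ (-(3 / 2) : ℝ) * (1 - ζ ^ 2) ^ (-(1 / 2) : ℝ) :=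
        mul_le_mul_of_nonneg_right (mul_le_mul hd
          (Real.rpow_le_rpow_of_nonpos hs hBs (by norm_num)) (Real.rpow_nonneg hBpos.le _)
          zero_le_one) (Real.rpow_nonneg hA.le _)
    _ = s ^ (-(3 / 2) : ℝ) * (1 - ζ ^ 2) ^ (-(1 / 2) : ℝ) := by rw [one_mul]

theorem differentiableAt_integral_phiKernel (ht : 0 < t) :
    DifferentiableAt ℝ (fun τ => ∫ ζ in Ioo 0 1, phiKernel τ ζ) t := by
  have hnhds : Ioi (t / 2) ∈ 𝓝 t := Ioi_mem_nhds (by linarith)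
  refine (hasDerivAt_integral_of_dominated_loc_of_deriv_le (F' := phiKernelDeriv) hnhds
    (Eventually.of_forall fun _ => by unfold phiKernel; fun_prop) (integrableOn_phiKernel ht)
    (by unfold phiKernelDeriv; fun_prop) ?_
    (integrableOn_one_sub_sq_rpow_neg_half.const_mul ((t / 2) ^ (-(3 / 2) : ℝ)))
    ?_).2.differentiableAt
  · filter_upwards [ae_restrict_mem measurableSet_Ioo] with ζ hζ τ hτ
    exact abs_phiKernelDeriv_le (by linarith) (le_of_lt hτ) hζ
  · filter_upwards [ae_restrict_mem measurableSet_Ioo] with ζ hζ τ hτ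
    exact hasDerivAt_phiKernel (by linarith [mem_Ioi.1 hτ]) hζ

end PhiKernel

theorem differentiableAt_Phi {x : ℝ} (hx : x < 1) : DifferentiableAt ℝ Phi x := by
  have hsqrt : DifferentiableAt ℝ (fun y => √(1 - y)) x :=
    ((differentiableAt_const 1).sub differentiableAt_id).sqrt (sub_pos.2 hx).ne'
  have hPhi : Phi = (fun t => ∫ ζ in Ioo 0 1, phiKernel t ζ) ∘ fun y => √(1 - y) :=
    funext Phi_eq_integral
  rw [hPhi]
  exact (differentiableAt_integral_phiKernel (Real.sqrt_pos.2 (sub_pos.2 hx))).comp x hsqrt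

theorem Phi_pos {x : ℝ} (hx : x < 1) : 0 < Phi x := by
  rw [Phi_eq_integral]
  exact integral_pos_of_ae_pos (integrableOn_phiKernel (Real.sqrt_pos.2 (sub_pos.2 hx)))
    ((ae_restrict_mem measurableSet_Ioo).mono fun ζ hζ => phiKernel_pos (Real.sqrt_nonneg _) hζ)

theorem strictConvexOn_log_Phi : StrictConvexOn ℝ (Iio 1) fun x => Real.log (Phi x) := by
  simp only [Phi_eq_integral]
  refine strictConvexOn_log_integral
    (fun x hx => integrableOn_phiKernel (Real.sqrt_pos.2 (sub_pos.2 hx))) (fun x _ => ?_) ?_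
  · exact (ae_restrict_mem measurableSet_Ioo).mono fun ζ hζ =>
      phiKernel_pos (Real.sqrt_nonneg _) hζ
  · exact (ae_restrict_mem measurableSet_Ioo).mono fun ζ hζ => strictConvexOn_log_phiKernel hζ

theorem strictMonoOn_logDeriv_Phi :
    StrictMonoOn (fun x : ℝ => deriv Phi x / Phi x) (Set.Iio 1) := by
  have hlogDeriv : ∀ x ∈ Iio (1 : ℝ),
      HasDerivAt (fun y => Real.log (Phi y)) (deriv Phi x / Phi x) x := fun x hx =>
    (differentiableAt_Phi hx).hasDerivAt.log (Phi_pos hx).ne'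
  exact (strictConvexOn_log_Phi.strictMonoOn_deriv fun x hx =>
    (hlogDeriv x hx).differentiableAt).congr fun x hx => (hlogDeriv x hx).deriv
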